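/- For η ≥ 1, μ > 0, x > 0 and y > 0, setting c_μ = √(y/x) · I_μ(2√(xy)) / I_{μ-1}(2√(xy)), the homogeneous-type recurrence Q_{η,μ+2}(x,y) − Q_{η,μ+1}(x,y) − η·Q_{η-1,μ+2}(x,y) = c_{μ+1} · (Q_{η,μ+1}(x,y) − Q_{η,μ}(x,y) − η·Q_{η-1,μ+1}(x,y)) holds. -/

import Mathlib

open Real MeasureTheory

/-- Modified Bessel function of the first kind `I_ν(z)` via its Maclaurin series. -/
noncomputable def besselI (ν z : ℝ) : ℝ :=
  (z / 2) ^ ν * ∑' n : ℕ, (z ^ 2 / 4) ^ n / (n.factorial * Real.Gamma (ν + n + 1))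

/-- Upper incomplete gamma function `Γ(a, y)`. -/
noncomputable def uGamma (a y : ℝ) : ℝ := ∫ t in Set.Ioi y, t ^ (a - 1) * Real.exp (-t)

/-- Regularized upper incomplete gamma function `Q_a(y) = Γ(a,y)/Γ(a)`. -/
noncomputable def regQ (a y : ℝ) : ℝ := uGamma a y / Real.Gamma a

/-- η-th moment of the partial non-central chi-squared distribution (Nuttall Q-function). -/
noncomputable def nuttallQ (η μ x y : ℝ) : ℝ :=
  x ^ ((1 - μ) / 2) *
    ∫ t in Set.Ioi y, t ^ (η + (μ - 1) / 2) * Real.exp (-t - x) *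
      besselI (μ - 1) (2 * Real.sqrt (x * t))

/-- Generalized Marcum Q-function. -/
noncomputable def marcumQ (μ x y : ℝ) : ℝ := nuttallQ 0 μ x y

/-- Complementary Marcum function `P_μ(x,y)`. -/
noncomputable def marcumP (μ x y : ℝ) : ℝ :=
  x ^ ((1 - μ) / 2) *
    ∫ t in Set.Ioc 0 y, t ^ ((μ - 1) / 2) * Real.exp (-t - x) *
      besselI (μ - 1) (2 * Real.sqrt (x * t))

/-!
Expanding `I_{μ-1}` in its power series and integrating termwise gives
`Q_{η,μ}(x,y) = e^{-x} ∑ xⁿ Γ(η+μ+n, y) / (n! Γ(μ+n))`. The recurrence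
`Γ(a+1, y) = a Γ(a, y) + y^a e^{-y}` of the upper incomplete gamma function collapses
`Q_{η,μ+1} - Q_{η,μ} - η Q_{η-1,μ+1}` termwise, leaving
`e^{-x-y} y^η (y/x)^{μ/2} I_μ(2√(xy))`. The recurrence is the quotient of this closed form
at `μ + 1` and at `μ`, since `I_μ(2√(xy)) > 0`.
-/

open Set Filter
open scoped Nat Topology

lemma integrableOn_rpow_sub_one_mul_exp_neg_Ioi {a y : ℝ} (ha : 0 < a) (hy : 0 ≤ y) :
    IntegrableOn (fun t : ℝ => t ^ (a - 1) * exp (-t)) (Ioi y) :=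
  ((GammaIntegral_convergent ha).mono_set (Ioi_subset_Ioi hy)).congr_fun
    (fun _ _ => mul_comm _ _) measurableSet_Ioi

lemma uGamma_nonneg {a y : ℝ} (hy : 0 ≤ y) : 0 ≤ uGamma a y :=
  setIntegral_nonneg measurableSet_Ioi fun t ht => by
    have : 0 ≤ t := hy.trans ht.le
    positivity

lemma uGamma_le_Gamma {a y : ℝ} (ha : 0 < a) (hy : 0 ≤ y) : uGamma a y ≤ Gamma a := by
  have h : uGamma a y = ∫ t in Ioi y, exp (-t) * t ^ (a - 1) := by simp only [uGamma, mul_comm]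
  rw [Gamma_eq_integral ha, h]
  refine setIntegral_mono_set (GammaIntegral_convergent ha) ?_ (.of_forall (Ioi_subset_Ioi hy))
  filter_upwards [ae_restrict_mem measurableSet_Ioi] with t (ht : 0 < t)
  positivity

lemma uGamma_add_one {a y : ℝ} (ha : 0 < a) (hy : 0 < y) :
    uGamma (a + 1) y = a * uGamma a y + y ^ a * exp (-y) := by
  have hint_a := (integrableOn_rpow_sub_one_mul_exp_neg_Ioi ha hy.le).const_mul a
  have hint_succ := integrableOn_rpow_sub_one_mul_exp_neg_Ioi (a := a + 1) (by linarith) hy.le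
  simp only [add_sub_cancel_right] at hint_succ
  have hderiv : ∀ t ∈ Ici y, HasDerivAt (fun t => t ^ a * exp (-t))
      (a * (t ^ (a - 1) * exp (-t)) - t ^ a * exp (-t)) t := fun t ht =>
    ((hasDerivAt_rpow_const (p := a) (Or.inl (hy.trans_le ht).ne')).mul
      (hasDerivAt_neg t).exp).congr_deriv (by ring)
  have hlim : Tendsto (fun t => t ^ a * exp (-t)) atTop (𝓝 0) := by
    simpa using tendsto_rpow_mul_exp_neg_mul_atTop_nhds_zero a 1 one_pos
  have hFTC := integral_Ioi_of_hasDerivAt_of_tendsto' hderiv (hint_a.sub hint_succ) hlim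
  rw [integral_sub hint_a hint_succ, integral_const_mul] at hFTC
  simp only [uGamma, add_sub_cancel_right]
  linarith

lemma Gamma_add_natCast_succ {b : ℝ} (hb : 0 < b) (n : ℕ) :
    Gamma (b + (n + 1 : ℕ)) = (b + n) * Gamma (b + n) := by
  rw [Nat.cast_succ, ← add_assoc, Gamma_add_one (by positivity)]

lemma summable_pow_mul_Gamma_div {x b c : ℝ} (hx : 0 < x) (hb : 0 < b) (hc : 0 < c) :
    Summable fun n : ℕ => x ^ n / (n ! * Gamma (b + n)) * Gamma (c + n) := by
  set f : ℕ → ℝ := fun n => x ^ n / (n ! * Gamma (b + n)) * Gamma (c + n) with hf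
  have hf_pos (n : ℕ) : 0 < f n := by positivity
  have hf_succ (n : ℕ) : f (n + 1) = x * (c + n) / ((n + 1) * (b + n)) * f n := by
    have : 0 < Gamma (b + n) := by positivity
    simp only [hf, Gamma_add_natCast_succ hb, Gamma_add_natCast_succ hc, Nat.factorial_succ,
      pow_succ]
    push_cast
    field_simp
  refine summable_of_ratio_norm_eventually_le (r := 1 / 2) (by norm_num) ?_
  filter_upwards [eventually_ge_atTop (⌈c⌉₊ + ⌈4 * x⌉₊)] with n hn
  have hcn : c ≤ n := (Nat.le_ceil c).trans (by exact_mod_cast (Nat.le_add_right _ _).trans hn)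
  have hxn : 4 * x ≤ n := (Nat.le_ceil _).trans (by exact_mod_cast (Nat.le_add_left _ _).trans hn)
  rw [norm_of_nonneg (hf_pos _).le, norm_of_nonneg (hf_pos n).le, hf_succ]
  refine mul_le_mul_of_nonneg_right ?_ (hf_pos n).le
  rw [div_le_iff₀ (by positivity)]
  nlinarith

lemma summable_pow_div_factorial_mul_Gamma {ν z : ℝ} (hν : -1 < ν) (hz : 0 < z) :
    Summable fun n : ℕ => z ^ n / (n ! * Gamma (ν + n + 1)) := by
  have hb : 0 < ν + 1 := by linarith
  refine (summable_pow_mul_Gamma_div (c := 1) hz hb one_pos).of_nonneg_of_le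
    (fun n => ?_) (fun n => ?_)
  all_goals rw [add_right_comm]
  · positivity
  · rw [add_comm 1 (n : ℝ), Gamma_nat_eq_factorial]
    exact le_mul_of_one_le_right (by positivity) (by exact_mod_cast n.factorial_pos)

lemma besselI_pos {ν z : ℝ} (hν : -1 < ν) (hz : 0 < z) : 0 < besselI ν z := by
  have hsum := summable_pow_div_factorial_mul_Gamma hν (show 0 < z ^ 2 / 4 by positivity)
  have hterm_pos (n : ℕ) : 0 < (z ^ 2 / 4) ^ n / (n ! * Gamma (ν + n + 1)) := by
    have : 0 < ν + n + 1 := by linarith [n.cast_nonneg (α := ℝ)]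
    positivity
  exact mul_pos (by positivity) (hsum.tsum_pos (fun n => (hterm_pos n).le) 0 (hterm_pos 0))

lemma besselI_two_mul_sqrt {ν z : ℝ} (hz : 0 ≤ z) :
    besselI ν (2 * √z) = z ^ (ν / 2) * ∑' n : ℕ, z ^ n / (n ! * Gamma (ν + n + 1)) := by
  rw [besselI, mul_div_cancel_left₀ _ two_ne_zero, sqrt_eq_rpow, ← rpow_mul hz, mul_pow,
    ← sqrt_eq_rpow, sq_sqrt hz]
  congr 1
  · ring_nf
  · norm_num

lemma summable_pow_div_mul_uGamma {x y b c : ℝ} (hx : 0 < x) (hy : 0 ≤ y) (hb : 0 < b)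
    (hc : 0 < c) : Summable fun n : ℕ => x ^ n / (n ! * Gamma (b + n)) * uGamma (c + n) y :=
  (summable_pow_mul_Gamma_div hx hb hc).of_nonneg_of_le
    (fun n => mul_nonneg (by positivity) (uGamma_nonneg hy))
    (fun n => by gcongr; exact uGamma_le_Gamma (by positivity) hy)

section NuttallQ

variable {η μ x y : ℝ}

lemma integrand_nuttallQ_eq_tsum (hx : 0 < x) {t : ℝ} (ht : 0 < t) :
    t ^ (η + (μ - 1) / 2) * exp (-t - x) * besselI (μ - 1) (2 * √(x * t)) =
      x ^ ((μ - 1) / 2) * exp (-x) *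
        ∑' n : ℕ, x ^ n / (n ! * Gamma (μ + n)) * (t ^ (η + μ + n - 1) * exp (-t)) := by
  rw [besselI_two_mul_sqrt (by positivity), ← tsum_mul_left, ← tsum_mul_left, ← tsum_mul_left]
  refine tsum_congr fun n => ?_
  have ht_pow : t ^ (η + μ + n - 1) = t ^ (η + (μ - 1) / 2) * t ^ ((μ - 1) / 2) * t ^ n := by
    rw [← rpow_natCast, ← rpow_add ht, ← rpow_add ht]
    ring_nf
  rw [ht_pow, mul_rpow hx.le ht.le, mul_pow, show μ - 1 + n + 1 = μ + n by ring,
    show -t - x = -t + -x by ring, exp_add]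
  ring

lemma nuttallQ_eq_tsum (hημ : 0 < η + μ) (hμ : 0 < μ) (hx : 0 < x) (hy : 0 < y) :
    nuttallQ η μ x y =
      exp (-x) * ∑' n : ℕ, x ^ n / (n ! * Gamma (μ + n)) * uGamma (η + μ + n) y := by
  set F : ℕ → ℝ → ℝ := fun n t =>
    x ^ n / (n ! * Gamma (μ + n)) * (t ^ (η + μ + n - 1) * exp (-t))
  have hF_int (n : ℕ) : IntegrableOn (F n) (Ioi y) :=
    (integrableOn_rpow_sub_one_mul_exp_neg_Ioi (by positivity) hy.le).const_mul _
  have hF_integral (n : ℕ) :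
      ∫ t in Ioi y, F n t = x ^ n / (n ! * Gamma (μ + n)) * uGamma (η + μ + n) y :=
    integral_const_mul _ _
  have hF_norm (n : ℕ) : ∫ t in Ioi y, ‖F n t‖ = ∫ t in Ioi y, F n t :=
    setIntegral_congr_fun measurableSet_Ioi fun t (ht : y < t) => by
      have : 0 < t := hy.trans ht
      exact norm_of_nonneg (by positivity)
  have hF_sum : Summable fun n => ∫ t in Ioi y, ‖F n t‖ := by
    simpa only [hF_norm, hF_integral] using summable_pow_div_mul_uGamma hx hy.le hμ hημ
  rw [nuttallQ, setIntegral_congr_fun measurableSet_Ioi fun t (ht : y < t) =>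
      integrand_nuttallQ_eq_tsum hx (hy.trans ht),
    integral_const_mul, ← integral_tsum_of_summable_integral_norm hF_int hF_sum]
  simp only [hF_integral]
  rw [← mul_assoc, ← mul_assoc, ← rpow_add hx, show (1 - μ) / 2 + (μ - 1) / 2 = 0 by ring,
    rpow_zero, one_mul]

lemma nuttallQ_tsum_term_sub_sub_mul (hημ : 0 < η + μ) (hμ : 0 < μ) (hy : 0 < y) (n : ℕ) :
    x ^ n / (n ! * Gamma (μ + 1 + n)) * uGamma (η + (μ + 1) + n) y -
        x ^ n / (n ! * Gamma (μ + n)) * uGamma (η + μ + n) y -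
        η * (x ^ n / (n ! * Gamma (μ + 1 + n)) * uGamma (η - 1 + (μ + 1) + n) y) =
      exp (-y) * y ^ (η + μ) * ((x * y) ^ n / (n ! * Gamma (μ + n + 1))) := by
  have ha : 0 < η + μ + n := by positivity
  rw [show η + (μ + 1) + n = η + μ + n + 1 by ring,
    show η - 1 + (μ + 1) + n = η + μ + n by ring, show μ + 1 + n = μ + n + 1 by ring,
    uGamma_add_one ha hy, Gamma_add_one (by positivity),
    rpow_add hy, rpow_natCast, mul_pow]
  have : 0 < Gamma (μ + n) := by positivity
  field_simp
  ring

theorem nuttallQ_sub_sub_mul_eq_besselI (hημ : 0 < η + μ) (hμ : 0 < μ) (hx : 0 < x)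
    (hy : 0 < y) :
    nuttallQ η (μ + 1) x y - nuttallQ η μ x y - η * nuttallQ (η - 1) (μ + 1) x y =
      exp (-x - y) * y ^ η * (y / x) ^ (μ / 2) * besselI μ (2 * √(x * y)) := by
  have hημ' : 0 < η - 1 + (μ + 1) := by linarith
  have hs₁ := summable_pow_div_mul_uGamma (b := μ + 1) (c := η + (μ + 1)) hx hy.le
    (by positivity) (by linarith)
  have hs₂ := summable_pow_div_mul_uGamma (c := η + μ) hx hy.le hμ hημ
  have hs₃ := summable_pow_div_mul_uGamma (b := μ + 1) hx hy.le (by positivity) hημ'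
  have hpow : y ^ (η + μ) = y ^ η * (y / x) ^ (μ / 2) * (x * y) ^ (μ / 2) := by
    rw [mul_assoc, ← mul_rpow (by positivity) (by positivity),
      show y / x * (x * y) = y ^ 2 by field_simp, ← rpow_natCast, ← rpow_mul hy.le,
      ← rpow_add hy]
    ring_nf
  rw [nuttallQ_eq_tsum (by linarith) (by linarith) hx hy, nuttallQ_eq_tsum hημ hμ hx hy,
    nuttallQ_eq_tsum hημ' (by linarith) hx hy, mul_left_comm η, ← mul_sub, ← mul_sub,
    ← tsum_mul_left, ← hs₁.tsum_sub hs₂, ← (hs₁.sub hs₂).tsum_sub (hs₃.mul_left η)]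
  simp only [nuttallQ_tsum_term_sub_sub_mul hημ hμ hy]
  rw [tsum_mul_left, besselI_two_mul_sqrt (by positivity), hpow, sub_eq_add_neg, exp_add]
  ring

end NuttallQ

theorem nuttallQ_homogeneous_recurrence (η μ x y : ℝ) (hη : 1 ≤ η) (hμ : 0 < μ)
    (hx : 0 < x) (hy : 0 < y) :
    nuttallQ η (μ + 2) x y - nuttallQ η (μ + 1) x y - η * nuttallQ (η - 1) (μ + 2) x y =
      (Real.sqrt (y / x) * (besselI (μ + 1) (2 * Real.sqrt (x * y)) /
          besselI μ (2 * Real.sqrt (x * y)))) *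
        (nuttallQ η (μ + 1) x y - nuttallQ η μ x y - η * nuttallQ (η - 1) (μ + 1) x y) := by
  have hclosed := nuttallQ_sub_sub_mul_eq_besselI (η := η) (by linarith) hμ hx hy
  have hclosed_succ :=
    nuttallQ_sub_sub_mul_eq_besselI (η := η) (μ := μ + 1) (by linarith) (by linarith) hx hy
  rw [show μ + 1 + 1 = μ + 2 by ring] at hclosed_succ
  have hI : besselI μ (2 * √(x * y)) ≠ 0 := (besselI_pos (by linarith) (by positivity)).ne'
  have hsqrt : (y / x) ^ ((μ + 1) / 2) = (y / x) ^ (μ / 2) * √(y / x) := by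
    rw [sqrt_eq_rpow, ← rpow_add (by positivity)]
    ring_nf
  rw [hclosed, hclosed_succ, hsqrt]
  field_simp
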